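/- arXiv:1710.09873 — 4 statements merged into one kernel-verified Lean document; each statement's English description precedes it below -/
import Mathlib

section
/- Let α be an irrational real number with continued fraction expansion [a_0; a_1, a_2, …], and let (q_n)_{n≥0} be the denominators of the convergents to α. Then every non-negative integer n can be expressed uniquely as n = ∑_{0≤i≤ℓ} b_i q_i, where the b_i are integers satisfying: (i) 0 ≤ b_0 < a_1; (ii) 0 ≤ b_i ≤ a_{i+1} for i ≥ 1; and (iii) for i ≥ 1, if b_i = a_{i+1} then b_{i−1} = 0. -/
/-!
The denominators satisfy `q (ℓ + 1) = a (ℓ + 1) * q ℓ + q (ℓ - 1)`. By induction on `ℓ`, an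
admissible digit string supported below `ℓ` has value `< q ℓ`: a non-maximal top digit leaves
room `q ℓ` for the lower part, and a maximal one forces the digit below it to vanish, leaving room
`q (ℓ - 1)`. Hence in a representation of `n < q (ℓ + 1)` the top digit and the value of the rest
are the quotient and remainder of `n` by `q ℓ`, which gives uniqueness; conversely, choosing them
this way (the greedy algorithm) produces an admissible string, which gives existence.
-/

noncomputable section

open Finset

namespace Ostrowski

structure IsDenominatorSeq (a q : ℕ → ℕ) : Prop where
  zero : q 0 = 1
  one : q 1 = a 1
  add_two : ∀ n, q (n + 2) = a (n + 2) * q (n + 1) + q n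
  partDen_pos : ∀ n, 0 < a (n + 1)

structure Admissible (a b : ℕ → ℕ) : Prop where
  zero_lt : b 0 < a 1
  le : ∀ i, 1 ≤ i → b i ≤ a (i + 1)
  pred_eq_zero : ∀ i, 1 ≤ i → b i = a (i + 1) → b (i - 1) = 0

theorem Admissible.update {a b : ℕ → ℕ} (hb : Admissible a b) {ℓ c : ℕ}
    (hzero : ℓ = 0 → c < a 1) (hle : 1 ≤ ℓ → c ≤ a (ℓ + 1))
    (hpred : 1 ≤ ℓ → c = a (ℓ + 1) → b (ℓ - 1) = 0) (hnext : b (ℓ + 1) < a (ℓ + 2)) :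
    Admissible a (Function.update b ℓ c) where
  zero_lt := by
    rcases eq_or_ne ℓ 0 with rfl | hℓ
    · simpa using hzero rfl
    · simpa [Function.update_of_ne hℓ.symm] using hb.zero_lt
  le i hi := by
    rcases eq_or_ne i ℓ with rfl | hiℓ
    · simpa using hle hi
    · simpa [Function.update_of_ne hiℓ] using hb.le i hi
  pred_eq_zero i hi heq := by
    rcases eq_or_ne i ℓ with rfl | hiℓ
    · simp only [Function.update_self] at heq
      rw [Function.update_of_ne (by omega)]
      exact hpred hi heq
    · rw [Function.update_of_ne hiℓ] at heq
      rcases eq_or_ne (i - 1) ℓ with hℓ | hℓ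
      · obtain rfl : i = ℓ + 1 := by omega
        exact absurd heq hnext.ne
      · rw [Function.update_of_ne hℓ]
        exact hb.pred_eq_zero i hi heq

theorem eq_zero_of_sum_range_lt {b q : ℕ → ℕ} {i ℓ : ℕ} (hi : i < ℓ)
    (h : ∑ j ∈ range ℓ, b j * q j < q i) : b i = 0 := by
  have : b i * q i ≤ ∑ j ∈ range ℓ, b j * q j :=
    single_le_sum (f := fun j => b j * q j) (fun _ _ => Nat.zero_le _) (mem_range.2 hi)
  by_contra hne
  nlinarith [Nat.one_le_iff_ne_zero.2 hne]

theorem sum_eq_sum_range {b : ℕ →₀ ℕ} {q : ℕ → ℕ} {ℓ : ℕ} (hsupp : b.support ⊆ range ℓ) :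
    (b.sum fun i c => c * q i) = ∑ i ∈ range ℓ, b i * q i :=
  b.sum_of_support_subset hsupp (fun i c => c * q i) fun _ _ => zero_mul _

theorem IsDenominatorSeq.of_genContFract {K : Type*} [Field K] [LinearOrder K]
    [IsStrictOrderedRing K] [FloorRing K] {v : K} {a q : ℕ → ℕ}
    (ha : ∀ i, (GenContFract.of v).partDens.get? i = some (a (i + 1) : K))
    (hq : ∀ i, (q i : K) = (GenContFract.of v).dens i) : IsDenominatorSeq a q where
  zero := by exact_mod_cast (hq 0).trans GenContFract.zeroth_den_eq_one
  one := by
    obtain ⟨gp, hs, hb⟩ := GenContFract.exists_s_b_of_partDen (ha 0)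
    exact_mod_cast (hq 1).trans ((GenContFract.first_den_eq hs).trans hb)
  add_two n := by
    obtain ⟨gp, hs, hb⟩ := GenContFract.exists_s_b_of_partDen (ha (n + 1))
    have hnum : gp.a = 1 := GenContFract.of_partNum_eq_one (GenContFract.partNum_eq_s_a hs)
    have := GenContFract.dens_recurrence hs (hq n).symm (hq (n + 1)).symm
    rw [← hq (n + 2), hb, hnum, one_mul] at this
    exact_mod_cast this
  partDen_pos i := by
    exact_mod_cast zero_lt_one.trans_le (GenContFract.of_one_le_get?_partDen (ha i))

namespace IsDenominatorSeq

variable {a q : ℕ → ℕ} (hq : IsDenominatorSeq a q)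
include hq

theorem pos : ∀ n, 0 < q n
  | 0 => by simp [hq.zero]
  | 1 => hq.one ▸ hq.partDen_pos 0
  | n + 2 => by rw [hq.add_two]; exact Nat.add_pos_right _ (pos n)

theorem le_succ : ∀ n, q n ≤ q (n + 1)
  | 0 => by rw [hq.zero, hq.one]; exact hq.partDen_pos 0
  | n + 1 => by
    rw [hq.add_two]
    nlinarith [hq.partDen_pos (n + 1)]

theorem strictMono_succ : StrictMono fun n => q (n + 1) :=
  strictMono_nat_of_lt_succ fun n => by
    rw [hq.add_two]
    nlinarith [hq.partDen_pos (n + 1), hq.pos n]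

theorem lt_succ_self (n : ℕ) : n < q (n + 1) :=
  calc n < n + q 1 := Nat.lt_add_of_pos_right (hq.pos 1)
    _ ≤ q (n + 1) := hq.strictMono_succ.add_le_nat n 0

theorem sum_range_lt {b : ℕ → ℕ} (hb : Admissible a b) :
    ∀ ℓ, ∑ i ∈ range ℓ, b i * q i < q ℓ
  | 0 => by simp [hq.zero]
  | 1 => by simpa [hq.zero, hq.one] using hb.zero_lt
  | ℓ + 2 => by
    rw [sum_range_succ, hq.add_two]
    rcases (hb.le (ℓ + 1) le_add_self).eq_or_lt with h | h
    · have hℓ := sum_range_lt hb ℓ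
      have hzero : b ℓ = 0 := hb.pred_eq_zero (ℓ + 1) le_add_self h
      rw [sum_range_succ, hzero, h, zero_mul, add_zero, add_comm]
      exact Nat.add_lt_add_left hℓ _
    · have := sum_range_lt hb (ℓ + 1)
      nlinarith

theorem eq_of_sum_range_eq {b b' : ℕ → ℕ} (hb : Admissible a b) (hb' : Admissible a b') :
    ∀ ℓ, ∑ i ∈ range ℓ, b i * q i = ∑ i ∈ range ℓ, b' i * q i → ∀ i < ℓ, b i = b' i
  | 0, _, i, hi => absurd hi (Nat.not_lt_zero i)
  | ℓ + 1, h, i, hi => by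
    rw [sum_range_succ, sum_range_succ] at h
    have hdiv {c : ℕ → ℕ} (hc : Admissible a c) :
        (∑ i ∈ range ℓ, c i * q i + c ℓ * q ℓ) / q ℓ = c ℓ ∧
          (∑ i ∈ range ℓ, c i * q i + c ℓ * q ℓ) % q ℓ = ∑ i ∈ range ℓ, c i * q i :=
      (Nat.div_mod_unique (hq.pos ℓ)).2 ⟨by ring, hq.sum_range_lt hc ℓ⟩
    obtain ⟨hdigit, hrest⟩ := hdiv hb
    obtain ⟨hdigit', hrest'⟩ := hdiv hb'
    rw [h] at hdigit hrest
    obtain rfl | hi := (Nat.lt_succ_iff.1 hi).eq_or_lt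
    · exact hdigit.symm.trans hdigit'
    · exact eq_of_sum_range_eq hb hb' ℓ (hrest.symm.trans hrest') i hi

theorem div_le_of_lt {n m : ℕ} (hn : n < q (m + 2)) : n / q (m + 1) ≤ a (m + 2) := by
  refine Nat.lt_succ_iff.1 ((Nat.div_lt_iff_lt_mul (hq.pos _)).2 ?_)
  rw [hq.add_two] at hn
  nlinarith [hq.le_succ m]

theorem mod_lt_of_div_eq {n m : ℕ} (hn : n < q (m + 2)) (hdiv : n / q (m + 1) = a (m + 2)) :
    n % q (m + 1) < q m := by
  have := Nat.div_add_mod n (q (m + 1))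
  rw [hq.add_two] at hn
  rw [hdiv] at this
  nlinarith

theorem exists_admissible :
    ∀ ℓ n, n < q ℓ → ∃ b : ℕ →₀ ℕ, Admissible a b ∧ b.support ⊆ range ℓ ∧
      ∑ i ∈ range ℓ, b i * q i = n
  | 0, n, hn => by
    refine ⟨0, ⟨?_, fun _ _ => Nat.zero_le _, fun i _ h => ?_⟩, by simp, ?_⟩
    · simpa using hq.partDen_pos 0
    · exact absurd h.symm (hq.partDen_pos i).ne'
    · rw [hq.zero] at hn
      simp only [range_zero, sum_empty]
      omega
  | ℓ + 1, n, hn => by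
    obtain ⟨b, hb, hsupp, hsum⟩ := exists_admissible ℓ (n % q ℓ) (Nat.mod_lt _ (hq.pos ℓ))
    have hvanish {i : ℕ} (hi : ℓ ≤ i) : b i = 0 :=
      Finsupp.notMem_support_iff.1 fun h => (mem_range.1 (hsupp h)).not_ge hi
    refine ⟨b.update ℓ (n / q ℓ), ?_, ?_, ?_⟩
    · rw [Finsupp.coe_update]
      refine hb.update (fun hℓ => ?_) (fun hℓ => ?_) (fun hℓ hdiv => ?_) ?_
      · subst hℓ
        simpa [hq.zero, hq.one] using hn
      · obtain ⟨m, rfl⟩ := Nat.exists_eq_add_of_le' hℓ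
        exact hq.div_le_of_lt hn
      · obtain ⟨m, rfl⟩ := Nat.exists_eq_add_of_le' hℓ
        exact eq_zero_of_sum_range_lt (Nat.lt_succ_self m)
          (hsum ▸ hq.mod_lt_of_div_eq hn hdiv)
      · rw [hvanish (Nat.le_succ ℓ)]
        exact hq.partDen_pos (ℓ + 1)
    · rw [range_add_one]
      exact (b.support_update_subset ℓ).trans (insert_subset_insert ℓ hsupp)
    · rw [sum_range_succ, Finsupp.coe_update, Function.update_self,
        sum_congr rfl fun i hi => by rw [Function.update_of_ne (mem_range.1 hi).ne], hsum,
        mul_comm]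
      exact Nat.mod_add_div n (q ℓ)

theorem eq_of_sum_eq {b b' : ℕ →₀ ℕ} (hb : Admissible a b) (hb' : Admissible a b')
    (h : (b.sum fun i c => c * q i) = b'.sum fun i c => c * q i) : b = b' := by
  obtain ⟨ℓ, hℓ⟩ := (b.support ∪ b'.support).exists_nat_subset_range
  obtain ⟨hsupp, hsupp'⟩ := union_subset_iff.1 hℓ
  rw [sum_eq_sum_range hsupp, sum_eq_sum_range hsupp'] at h
  ext i
  by_cases hi : i < ℓ
  · exact hq.eq_of_sum_range_eq hb hb' ℓ h i hi
  · rw [Finsupp.notMem_support_iff.1 fun h => hi (mem_range.1 (hsupp h)),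
      Finsupp.notMem_support_iff.1 fun h => hi (mem_range.1 (hsupp' h))]

end IsDenominatorSeq

end Ostrowski

theorem ostrowski_representation_general (α : ℝ)
    (a : ℕ → ℕ) (q : ℕ → ℕ)
    (ha : ∀ i : ℕ, (GenContFract.of α).partDens.get? i = some ((a (i + 1) : ℝ)))
    (hq : ∀ i : ℕ, ((q i : ℝ)) = (GenContFract.of α).dens i) :
    ∀ n : ℕ, ∃! b : ℕ →₀ ℕ,
      (b.sum fun i c => c * q i) = n ∧
      b 0 < a 1 ∧
      (∀ i : ℕ, 1 ≤ i → b i ≤ a (i + 1)) ∧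
      (∀ i : ℕ, 1 ≤ i → b i = a (i + 1) → b (i - 1) = 0) := by
  have hden := Ostrowski.IsDenominatorSeq.of_genContFract ha hq
  intro n
  obtain ⟨b, hb, hsupp, hsum⟩ := hden.exists_admissible (n + 1) n (hden.lt_succ_self n)
  have hval : (b.sum fun i c => c * q i) = n := (Ostrowski.sum_eq_sum_range hsupp).trans hsum
  refine ⟨b, ⟨hval, hb.zero_lt, hb.le, hb.pred_eq_zero⟩, ?_⟩
  rintro b' ⟨hval', hzero, hle, hpred⟩
  exact hden.eq_of_sum_eq ⟨hzero, hle, hpred⟩ hb (hval'.trans hval.symm)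

/-- **Ostrowski's theorem.** Let `α` be irrational with continued fraction
expansion `[a₀; a₁, a₂, …]` and let `(q i)` be the denominators of its
convergents.  Then every natural number `n` has a unique representation
`n = ∑ i, b i · q i` with `b 0 < a 1`, `b i ≤ a (i+1)` for `i ≥ 1`, and, for
`i ≥ 1`, `b i = a (i+1) → b (i-1) = 0`. -/
theorem ostrowski_representation (α : ℝ) (hα : Irrational α)
    (a : ℕ → ℕ) (q : ℕ → ℕ)
    (ha : ∀ i : ℕ, (GenContFract.of α).partDens.get? i = some ((a (i + 1) : ℝ)))
    (hq : ∀ i : ℕ, ((q i : ℝ)) = (GenContFract.of α).dens i) :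
    ∀ n : ℕ, ∃! b : ℕ →₀ ℕ,
      (b.sum fun i c => c * q i) = n ∧
      b 0 < a 1 ∧
      (∀ i : ℕ, 1 ≤ i → b i ≤ a (i + 1)) ∧
      (∀ i : ℕ, 1 ≤ i → b i = a (i + 1) → b (i - 1) = 0) :=
  ostrowski_representation_general α a q ha hq

end
end

section
/- Let m ≥ 2 be an integer and φ = (m + 2 + √(m² + 4m))/2. There exists a constant C > 0 depending only on m such that for every finite interval I of integers with length λ(I) ≥ 2, every real K ≥ 1, and every real a, one has ∑_{h∈I} min(K, ‖a + hφ‖^{−2}) ≤ C (√K · λ(I) + K · ln λ(I)). -/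
/-!
As a root of `x² - (m + 2)x + 1`, `φ` is badly approximable: `‖qφ‖ ≥ 1 / ((m + 3)|q|)`.
Hence for `h ≠ h'` in an interval of length `N` the signed distances
`a + hφ - round (a + hφ)` are `1 / ((m + 3)N)`-separated. For `δ`-separated reals `r i`,
the sum of `min K (r i)⁻²` is at most `2K + 6√K / δ`: each annulus `jδ ≤ |r| < (j + 1)δ`
holds at most two points, the annuli with `j ≲ 1 / (δ√K)` contribute `K` each and the
others `(jδ)⁻²`. The term `2K` is absorbed by `K log N`, as `N ≥ 2`.
-/

noncomputable section

/-- `‖x‖`: the distance from `x` to the nearest integer. -/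
def intDist (x : ℝ) : ℝ := |x - round x|

/-- `φ = (m + 2 + √(m² + 4m))/2`. -/
def phi (m : ℕ) : ℝ := (m + 2 + Real.sqrt (m ^ 2 + 4 * m)) / 2

open Finset Real

lemma intDist_le_abs_sub_intCast (x : ℝ) (n : ℤ) : intDist x ≤ |x - n| := round_le x n

/-- `(p - q x)(p - q x')` is a nonzero integer, where `p` is the integer nearest to `q x` and
`x' = t - x` is the conjugate root. -/
theorem Irrational.one_le_intDist_mul {x : ℝ} (hx : Irrational x) {t u : ℤ}
    (hxt : x ^ 2 = t * x + u) {q : ℤ} (hq : q ≠ 0) :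
    1 ≤ intDist (q * x) * (|(q : ℝ)| * |2 * x - t| + 1 / 2) := by
  set p := round ((q : ℝ) * x)
  have hnorm :
      ((p : ℝ) - q * x) * (p - q * (t - x)) = ((p ^ 2 - t * p * q - u * q ^ 2 : ℤ) : ℝ) := by
    push_cast
    linear_combination (-(q : ℝ) ^ 2) * hxt
  have hqx : ∀ n : ℤ, (q : ℝ) * x ≠ n := (hx.intCast_mul hq).ne_int
  have hne : p ^ 2 - t * p * q - u * q ^ 2 ≠ 0 := by
    intro h0
    rw [h0, Int.cast_zero] at hnorm
    rcases mul_eq_zero.1 hnorm with h | h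
    · exact hqx p (by linarith)
    · exact hqx (q * t - p) (by push_cast; linarith)
  have hconj : |(p : ℝ) - q * (t - x)| ≤ |(q : ℝ)| * |2 * x - t| + 1 / 2 := by
    calc |(p : ℝ) - q * (t - x)| = |q * (2 * x - t) + ((p : ℝ) - q * x)| := by ring_nf
      _ ≤ |(q : ℝ)| * |2 * x - t| + |(p : ℝ) - q * x| := by
        rw [← abs_mul]; exact abs_add_le _ _
      _ ≤ |(q : ℝ)| * |2 * x - t| + 1 / 2 := by
        gcongr; rw [abs_sub_comm]; exact abs_sub_round _
  calc (1 : ℝ) ≤ |((p ^ 2 - t * p * q - u * q ^ 2 : ℤ) : ℝ)| := by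
        exact_mod_cast Int.one_le_abs hne
    _ = intDist (q * x) * |(p : ℝ) - q * (t - x)| := by
        rw [← hnorm, abs_mul, intDist, abs_sub_comm]
    _ ≤ intDist (q * x) * (|(q : ℝ)| * |2 * x - t| + 1 / 2) := by
        gcongr; exact abs_nonneg _

lemma phi_sq (m : ℕ) : phi m ^ 2 = (m + 2) * phi m - 1 := by
  have hs : √((m : ℝ) ^ 2 + 4 * m) ^ 2 = (m : ℝ) ^ 2 + 4 * m := Real.sq_sqrt (by positivity)
  unfold phi
  linear_combination hs / 4

lemma two_mul_phi_sub (m : ℕ) : 2 * phi m - (m + 2) = √((m : ℝ) ^ 2 + 4 * m) := by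
  unfold phi; ring

/-- `m² + 4m` lies strictly between `(m + 1)²` and `(m + 2)²`. -/
lemma irrational_phi {m : ℕ} (hm : 1 ≤ m) : Irrational (phi m) := by
  have hsq : ¬IsSquare (m ^ 2 + 4 * m) := by
    rintro ⟨t, ht⟩
    exact Nat.not_exists_sq (m := m + 1) (by nlinarith) (by nlinarith) ⟨t, ht.symm⟩
  have h := ((irrational_sqrt_natCast_iff.2 hsq).natCast_add (m + 2)).div_natCast two_ne_zero
  unfold phi
  push_cast at h
  exact h

lemma one_div_le_intDist_mul_phi {m : ℕ} (hm : 1 ≤ m) {q : ℤ} (hq : q ≠ 0) :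
    1 / ((m + 3) * |(q : ℝ)|) ≤ intDist (q * phi m) := by
  have hL := (irrational_phi hm).one_le_intDist_mul (t := m + 2) (u := -1)
    (by push_cast; linarith [phi_sq m]) hq
  have hq1 : (1 : ℝ) ≤ |(q : ℝ)| := by exact_mod_cast Int.one_le_abs hq
  have hs : √((m : ℝ) ^ 2 + 4 * m) ≤ m + 2 :=
    Real.sqrt_le_iff.2 ⟨by positivity, by nlinarith⟩
  have hconj :
      |(q : ℝ)| * |2 * phi m - ((m + 2 : ℤ) : ℝ)| + 1 / 2 ≤ (m + 3) * |(q : ℝ)| := by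
    push_cast
    rw [two_mul_phi_sub, abs_of_nonneg (Real.sqrt_nonneg _)]
    nlinarith
  rw [div_le_iff₀ (by positivity)]
  calc 1 ≤ _ := hL
    _ ≤ intDist (q * phi m) * ((m + 3) * |(q : ℝ)|) := by
      gcongr
      exact abs_nonneg _

lemma abs_sub_lt_card_Icc {A B h h' : ℤ} (hh : h ∈ Icc A B) (hh' : h' ∈ Icc A B) :
    |h - h'| < #(Icc A B) := by
  rw [mem_Icc] at hh hh'
  rw [Int.card_Icc_of_le A B (by omega), abs_sub_lt_iff]
  omega

lemma one_div_le_abs_sub_residue {m : ℕ} (hm : 1 ≤ m) (a : ℝ) {A B h h' : ℤ}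
    (hh : h ∈ Icc A B) (hh' : h' ∈ Icc A B) (hne : h ≠ h') :
    1 / ((m + 3) * #(Icc A B)) ≤
      |(a + h * phi m - round (a + h * phi m)) -
        (a + h' * phi m - round (a + h' * phi m))| := by
  have hpos : (0 : ℝ) < |((h - h' : ℤ) : ℝ)| := by
    rw [abs_pos, Int.cast_ne_zero]; exact sub_ne_zero.2 hne
  have hlt : |((h - h' : ℤ) : ℝ)| < #(Icc A B) := by
    exact_mod_cast abs_sub_lt_card_Icc hh hh'
  calc 1 / ((m + 3) * #(Icc A B)) ≤ 1 / ((m + 3) * |((h - h' : ℤ) : ℝ)|) := by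
        gcongr
    _ ≤ intDist ((h - h' : ℤ) * phi m) := one_div_le_intDist_mul_phi hm (sub_ne_zero.2 hne)
    _ ≤ |((h - h' : ℤ) : ℝ) * phi m -
          ((round (a + h * phi m) - round (a + h' * phi m) : ℤ) : ℝ)| :=
        intDist_le_abs_sub_intCast _ _
    _ = _ := by push_cast; ring_nf

lemma sum_range_ite_le {K c : ℝ} (hK : 0 ≤ K) (hc : 0 ≤ c) {j₀ : ℕ} (hj₀ : 1 ≤ j₀)
    (J : ℕ) :
    ∑ j ∈ range J, (if j < j₀ then K else c / j ^ 2) ≤ j₀ * K + 2 * c / j₀ := by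
  rw [sum_ite, sum_const, nsmul_eq_mul]
  have hsmall : #((range J).filter (· < j₀)) ≤ j₀ :=
    (card_le_card fun j hj => mem_range.2 (mem_filter.1 hj).2).trans (card_range j₀).le
  have hlarge : ∑ j ∈ (range J).filter (¬ · < j₀), c / (j : ℝ) ^ 2 ≤ 2 * c / j₀ :=
    calc ∑ j ∈ (range J).filter (¬ · < j₀), c / (j : ℝ) ^ 2
        ≤ ∑ j ∈ Ioo (j₀ - 1) J, c / (j : ℝ) ^ 2 := by
          refine sum_le_sum_of_subset_of_nonneg (fun j hj => ?_) fun _ _ _ => by positivity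
          simp only [mem_filter, mem_range, not_lt] at hj
          exact mem_Ioo.2 ⟨by omega, hj.1⟩
      _ = c * ∑ j ∈ Ioo (j₀ - 1) J, ((j : ℝ) ^ 2)⁻¹ := by
          rw [mul_sum]; simp only [div_eq_mul_inv]
      _ ≤ c * (2 / ((j₀ - 1 : ℕ) + 1)) := by gcongr; exact sum_Ioo_inv_sq_le _ _
      _ = 2 * c / j₀ := by
          rw [Nat.cast_sub hj₀, Nat.cast_one, sub_add_cancel]; ring
  exact add_le_add (mul_le_mul_of_nonneg_right (by exact_mod_cast hsmall) hK) hlarge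

section Separated

variable {ι : Type*} (s : Finset ι) (r : ι → ℝ) {δ K : ℝ}

theorem sum_min_one_div_sq_le_of_separated_of_nonneg (hδ : 0 < δ) (hK : 0 < K)
    (hr : ∀ i ∈ s, 0 ≤ r i)
    (hsep : ∀ i ∈ s, ∀ j ∈ s, i ≠ j → δ ≤ |r i - r j|) :
    ∑ i ∈ s, min K (1 / r i ^ 2) ≤ K + 3 * √K / δ := by
  set bin : ι → ℕ := fun i => ⌊r i / δ⌋₊
  have hbin : ∀ i ∈ s, bin i * δ ≤ r i ∧ r i < (bin i + 1) * δ := fun i hi =>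
    ⟨(le_div_iff₀ hδ).1 (Nat.floor_le (div_nonneg (hr i hi) hδ.le)),
      (div_lt_iff₀ hδ).1 (Nat.lt_floor_add_one _)⟩
  have hinj : Set.InjOn bin s := by
    intro i hi j hj hij
    by_contra hne
    obtain ⟨hi₁, hi₂⟩ := hbin i hi
    obtain ⟨hj₁, hj₂⟩ := hbin j hj
    rw [hij] at hi₁ hi₂
    exact (hsep i hi j hj hne).not_gt (abs_sub_lt_iff.2 ⟨by linarith, by linarith⟩)
  have hsqrt : 0 < √K := Real.sqrt_pos.2 hK
  set j₀ := ⌈1 / (δ * √K)⌉₊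
  have hj₀ : 1 / (δ * √K) ≤ j₀ := Nat.le_ceil _
  have hj₀' : (j₀ : ℝ) < 1 / (δ * √K) + 1 := Nat.ceil_lt_add_one (by positivity)
  have hj₀1 : 1 ≤ j₀ := Nat.one_le_iff_ne_zero.2 (Nat.ceil_pos.2 (by positivity)).ne'
  set b : ℕ → ℝ := fun j => if j < j₀ then K else (1 / δ ^ 2) / j ^ 2
  have hterm : ∀ i ∈ s, min K (1 / r i ^ 2) ≤ b (bin i) := by
    intro i hi
    by_cases hsmall : bin i < j₀
    · simp only [b, if_pos hsmall]; exact min_le_left _ _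
    · simp only [b, if_neg hsmall]
      have hpos : (0 : ℝ) < bin i * δ := by
        have : (1 : ℝ) ≤ bin i := by exact_mod_cast hj₀1.trans (not_lt.1 hsmall)
        positivity
      calc min K (1 / r i ^ 2) ≤ 1 / r i ^ 2 := min_le_right _ _
        _ ≤ 1 / (bin i * δ) ^ 2 := by gcongr; exact (hbin i hi).1
        _ = 1 / δ ^ 2 / (bin i) ^ 2 := by ring
  obtain ⟨J, hJ⟩ := (s.image bin).exists_nat_subset_range
  have hb : ∀ j, 0 ≤ b j := fun j => by simp only [b]; split_ifs <;> positivity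
  calc ∑ i ∈ s, min K (1 / r i ^ 2) ≤ ∑ i ∈ s, b (bin i) := sum_le_sum hterm
    _ = ∑ j ∈ s.image bin, b j := (sum_image hinj).symm
    _ ≤ ∑ j ∈ range J, b j := sum_le_sum_of_subset_of_nonneg hJ fun j _ _ => hb j
    _ ≤ j₀ * K + 2 * (1 / δ ^ 2) / j₀ := sum_range_ite_le hK.le (by positivity) hj₀1 J
    _ ≤ (1 / (δ * √K) + 1) * K + 2 * (1 / δ ^ 2) / (1 / (δ * √K)) := by
      gcongr
    _ = K + 3 * √K / δ := by
      field_simp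
      linear_combination -Real.sq_sqrt hK.le

theorem sum_min_one_div_sq_le_of_separated (hδ : 0 < δ) (hK : 0 < K)
    (hsep : ∀ i ∈ s, ∀ j ∈ s, i ≠ j → δ ≤ |r i - r j|) :
    ∑ i ∈ s, min K (1 / r i ^ 2) ≤ 2 * K + 6 * √K / δ := by
  have hnonneg :=
    sum_min_one_div_sq_le_of_separated_of_nonneg (s.filter (0 ≤ r ·)) r hδ hK
      (fun i hi => (mem_filter.1 hi).2)
      (fun i hi j hj => hsep i (mem_filter.1 hi).1 j (mem_filter.1 hj).1)
  have hneg :=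
    sum_min_one_div_sq_le_of_separated_of_nonneg (s.filter (¬ 0 ≤ r ·)) (-r ·) hδ hK
      (fun i hi => neg_nonneg.2 (not_le.1 (mem_filter.1 hi).2).le)
      (fun i hi j hj hij => by
        rw [neg_sub_neg, abs_sub_comm]
        exact hsep i (mem_filter.1 hi).1 j (mem_filter.1 hj).1 hij)
  simp only [neg_sq] at hneg
  rw [← sum_filter_add_sum_filter_not s (0 ≤ r ·)]
  linarith [show 6 * √K / δ = 3 * √K / δ + 3 * √K / δ by ring]

end Separated

/-- Discrepancy-type estimate: for `m ≥ 2` and `φ = (m+2+√(m²+4m))/2` there is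
`C > 0` (depending only on `m`) such that for every finite integer interval
`I = [A, B] ∩ ℤ` with `λ(I) ≥ 2`, every `K ≥ 1` and every `a ∈ ℝ`,
`∑_{h ∈ I} min(K, ‖a + hφ‖⁻²) ≤ C(√K λ(I) + K ln λ(I))`. -/
theorem discrepancy_estimate (m : ℕ) (hm : 2 ≤ m) :
    ∃ C > (0 : ℝ), ∀ A B : ℤ, (2 : ℝ) ≤ ((Finset.Icc A B).card : ℝ) →
      ∀ K : ℝ, 1 ≤ K → ∀ a : ℝ,
        ∑ h ∈ Finset.Icc A B, min K (1 / intDist (a + h * phi m) ^ 2) ≤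
          C * (Real.sqrt K * ((Finset.Icc A B).card : ℝ) +
            K * Real.log ((Finset.Icc A B).card : ℝ)) := by
  refine ⟨6 * (m + 3) + 3, by positivity, fun A B hN K hK a => ?_⟩
  have hsum := sum_min_one_div_sq_le_of_separated (Icc A B)
    (fun h : ℤ => a + h * phi m - round (a + h * phi m)) (K := K) (by positivity) (by positivity)
    (fun h hh h' hh' => one_div_le_abs_sub_residue (by omega) a hh hh')
  set N : ℝ := (#(Icc A B) : ℝ)
  have hlog : 2 / 3 ≤ Real.log N := by
    have := Real.log_le_log two_pos hN
    linarith [Real.log_two_gt_d9]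
  calc ∑ h ∈ Icc A B, min K (1 / intDist (a + h * phi m) ^ 2)
      = ∑ h ∈ Icc A B, min K (1 / (a + h * phi m - round (a + h * phi m)) ^ 2) := by
        simp only [intDist, sq_abs]
    _ ≤ 2 * K + 6 * √K / (1 / ((m + 3) * N)) := hsum
    _ = 2 * K + 6 * (m + 3) * (√K * N) := by field_simp
    _ ≤ (6 * (m + 3) + 3) * (√K * N + K * Real.log N) := by
      have hKlog : 0 ≤ K * Real.log N := by positivity
      have h2K : 2 * K ≤ 3 * (K * Real.log N) := by nlinarith
      have : 0 ≤ √K * N := by positivity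
      nlinarith [mul_nonneg (Nat.cast_nonneg m : (0 : ℝ) ≤ m) hKlog]

end
end

section
/- Let z_0, …, z_{N−1} be complex numbers. For every positive integer R, |∑_{n=0}^{N−1} z_n|² ≤ ((N + R − 1)/R) · ∑_{|r|<R} (1 − |r|/R) · |∑_{n : 0 ≤ n < N and 0 ≤ n+r < N} conj(z_n) · z_{n+r}|, where the inner sum is over those integers n with both 0 ≤ n < N and 0 ≤ n + r < N, and conj denotes complex conjugation. -/
/-!
Extend `z` by zero to `f : ℤ → ℂ` and form the window sums `g m = ∑_{r < R} f (m - r)`. Summing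
them over the `N + R - 1` values of `m` for which they can be nonzero counts every `f n` exactly
`R` times, so Cauchy–Schwarz gives `R² ‖∑ f‖² ≤ (N + R - 1) ∑_m ‖g m‖²`. Expanding `‖g m‖²` and
summing over `m` turns the right-hand side into `∑_{r, s < R} C (r - s)` for the autocorrelation
`C` of `f`, and each shift `d` is the difference of exactly `R - |d|` pairs `(r, s)`.
-/

open Finset

section Reindexing

variable {M : Type*} [AddCommMonoid M]

theorem sum_Ico_zero_eq_sum_range (g : ℤ → M) (N : ℕ) :
    ∑ n ∈ Ico (0 : ℤ) N, g n = ∑ k ∈ range N, g k := by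
  simp [Int.Ico_eq_finset_map, sum_map]

theorem sum_Ico_sub_eq_of_support_subset {f : ℤ → M} {a b : ℤ}
    (hf : Function.support f ⊆ Set.Ico a b) {r c : ℤ} (hr : 0 ≤ r) (hrc : r ≤ c) :
    ∑ m ∈ Ico a (b + c), f (m - r) = ∑ n ∈ Ico a b, f n := by
  have hshift : ∑ m ∈ Ico a (b + c), f (m - r) = ∑ n ∈ Ico (a - r) (b + c - r), f n := by
    simpa using sum_Ico_add_right_sub_eq (f := f) (a - r) (b + c - r) r
  rw [hshift]
  refine (sum_subset (Ico_subset_Ico (by omega) (by omega)) fun n _ hn => ?_).symm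
  exact Function.notMem_support.mp fun h => hn (by simpa using hf h)

theorem card_filter_sub_eq_sub_natAbs (R : ℕ) (d : ℤ) :
    #{p ∈ range R ×ˢ range R | (p.1 : ℤ) - p.2 = d} = R - d.natAbs := by
  rw [← card_range (R - d.natAbs)]
  refine card_bij' (fun p _ => min p.1 p.2) (fun k _ => (k + d.toNat, k + (-d).toNat))
    ?_ ?_ ?_ ?_
  · intro p hp
    simp only [mem_filter, mem_product, mem_range] at hp ⊢
    omega
  · intro k hk
    simp only [mem_filter, mem_product, mem_range] at hk ⊢
    omega
  · intro p hp
    simp only [mem_filter, mem_product, mem_range] at hp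
    ext <;> dsimp only <;> omega
  · intro k hk
    simp only [mem_range] at hk
    omega

theorem sum_range_sum_range_sub_eq_sum_Icc (R : ℕ) (h : ℤ → M) :
    ∑ r ∈ range R, ∑ s ∈ range R, h (r - s) =
      ∑ d ∈ Icc (-R + 1 : ℤ) (R - 1), (R - d.natAbs) • h d := by
  rw [← sum_product', ← sum_fiberwise_of_maps_to (g := fun p : ℕ × ℕ => (p.1 : ℤ) - p.2)
    (t := Icc (-R + 1 : ℤ) (R - 1)) fun p hp => by
      simp only [mem_product, mem_range] at hp
      simp only [mem_Icc]
      omega]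
  refine sum_congr rfl fun d _ => ?_
  rw [sum_congr rfl fun p hp => congrArg h (mem_filter.mp hp).2, sum_const,
    card_filter_sub_eq_sub_natAbs]

end Reindexing

theorem norm_sum_sq_le_card_mul_sum_norm_sq {ι E : Type*} [SeminormedAddCommGroup E]
    (s : Finset ι) (g : ι → E) : ‖∑ i ∈ s, g i‖ ^ 2 ≤ #s * ∑ i ∈ s, ‖g i‖ ^ 2 :=
  (pow_le_pow_left₀ (norm_nonneg _) (norm_sum_le _ _) 2).trans sq_sum_le_card_mul_sum_sq

section Autocorrelation

variable {𝕜 : Type*} [RCLike 𝕜]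

noncomputable def autocorrelation (f : ℤ → 𝕜) (N : ℕ) (d : ℤ) : 𝕜 :=
  ∑ n ∈ Ico (0 : ℤ) N, starRingEnd 𝕜 (f n) * f (n + d)

variable {f : ℤ → 𝕜} {N : ℕ} (R : ℕ)

theorem sum_Ico_sum_range_sub_eq_mul_sum (hf : Function.support f ⊆ Set.Ico 0 N) :
    ∑ m ∈ Ico (0 : ℤ) (N + (R - 1)), ∑ r ∈ range R, f (m - r) =
      R * ∑ n ∈ Ico (0 : ℤ) N, f n := by
  rw [sum_comm, sum_congr rfl fun r hr => sum_Ico_sub_eq_of_support_subset hf (by omega)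
    (by have := mem_range.mp hr; omega), sum_const, card_range, nsmul_eq_mul]

theorem sum_Ico_conj_mul_eq_sum_autocorrelation (hf : Function.support f ⊆ Set.Ico 0 N) :
    ∑ m ∈ Ico (0 : ℤ) (N + (R - 1)),
        starRingEnd 𝕜 (∑ r ∈ range R, f (m - r)) * ∑ s ∈ range R, f (m - s) =
      ∑ r ∈ range R, ∑ s ∈ range R, autocorrelation f N (r - s) := by
  simp only [map_sum, sum_mul_sum]
  rw [sum_comm]
  refine sum_congr rfl fun r hr => ?_
  rw [sum_comm]
  refine sum_congr rfl fun s _ => ?_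
  have hsupp : Function.support (fun n => starRingEnd 𝕜 (f n) * f (n + (r - s))) ⊆ Set.Ico 0 N :=
    fun n hn => hf (left_ne_zero_of_mul (by simpa using hn))
  rw [autocorrelation, ← sum_Ico_sub_eq_of_support_subset hsupp (r := r) (c := R - 1) (by omega)
    (by have := mem_range.mp hr; omega)]
  refine sum_congr rfl fun m _ => ?_
  ring_nf

theorem sum_Ico_norm_sq_le_sum_autocorrelation (hf : Function.support f ⊆ Set.Ico 0 N) :
    ∑ m ∈ Ico (0 : ℤ) (N + (R - 1)), ‖∑ r ∈ range R, f (m - r)‖ ^ 2 ≤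
      ∑ d ∈ Icc (-R + 1 : ℤ) (R - 1), (R - d.natAbs) • ‖autocorrelation f N d‖ := by
  rw [← sum_range_sum_range_sub_eq_sum_Icc]
  calc ∑ m ∈ Ico (0 : ℤ) (N + (R - 1)), ‖∑ r ∈ range R, f (m - r)‖ ^ 2
      = ‖∑ r ∈ range R, ∑ s ∈ range R, autocorrelation f N (r - s)‖ := by
        rw [← sum_Ico_conj_mul_eq_sum_autocorrelation R hf]
        simp only [RCLike.conj_mul, ← RCLike.ofReal_pow, ← RCLike.ofReal_sum, RCLike.norm_ofReal]
        rw [abs_of_nonneg (by positivity)]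
    _ ≤ ∑ r ∈ range R, ∑ s ∈ range R, ‖autocorrelation f N (r - s)‖ :=
        (norm_sum_le _ _).trans (sum_le_sum fun r _ => norm_sum_le _ _)

theorem norm_sum_sq_le_autocorrelation {R : ℕ} (hR : 0 < R)
    (hf : Function.support f ⊆ Set.Ico 0 N) :
    ‖∑ n ∈ Ico (0 : ℤ) N, f n‖ ^ 2 ≤
      ((N + R - 1) / R) *
        ∑ d ∈ Icc (-R + 1 : ℤ) (R - 1), (1 - |(d : ℝ)| / R) * ‖autocorrelation f N d‖ := by
  have hR' : (0 : ℝ) < R := by exact_mod_cast hR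
  have hcard : (#(Ico (0 : ℤ) (N + (R - 1))) : ℝ) = N + R - 1 := by
    rw [Int.card_Ico, sub_zero, show ((N : ℤ) + (R - 1)).toNat = N + R - 1 by omega,
      Nat.cast_sub (by omega)]
    push_cast
    ring
  have hweights : ∑ d ∈ Icc (-R + 1 : ℤ) (R - 1), (R - d.natAbs) • ‖autocorrelation f N d‖ =
      R * ∑ d ∈ Icc (-R + 1 : ℤ) (R - 1), (1 - |(d : ℝ)| / R) * ‖autocorrelation f N d‖ := by
    rw [mul_sum]
    refine sum_congr rfl fun d hd => ?_
    rw [mem_Icc] at hd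
    rw [nsmul_eq_mul, Nat.cast_sub (by omega), Nat.cast_natAbs, Int.cast_abs]
    field_simp
  have hscaled : (R : ℝ) * (R * ‖∑ n ∈ Ico (0 : ℤ) N, f n‖ ^ 2) ≤ R * ((N + R - 1) *
      ∑ d ∈ Icc (-R + 1 : ℤ) (R - 1), (1 - |(d : ℝ)| / R) * ‖autocorrelation f N d‖) := by
    calc (R : ℝ) * (R * ‖∑ n ∈ Ico (0 : ℤ) N, f n‖ ^ 2)
        = ‖∑ m ∈ Ico (0 : ℤ) (N + (R - 1)), ∑ r ∈ range R, f (m - r)‖ ^ 2 := by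
          rw [sum_Ico_sum_range_sub_eq_mul_sum R hf, norm_mul, RCLike.norm_natCast]
          ring
      _ ≤ (N + R - 1) * ∑ m ∈ Ico (0 : ℤ) (N + (R - 1)), ‖∑ r ∈ range R, f (m - r)‖ ^ 2 := by
          rw [← hcard]
          exact norm_sum_sq_le_card_mul_sum_norm_sq _ _
      _ ≤ (N + R - 1) * (R * ∑ d ∈ Icc (-R + 1 : ℤ) (R - 1),
            (1 - |(d : ℝ)| / R) * ‖autocorrelation f N d‖) := by
          rw [← hweights]
          refine mul_le_mul_of_nonneg_left (sum_Ico_norm_sq_le_sum_autocorrelation R hf) ?_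
          rw [← hcard]
          positivity
      _ = _ := by ring
  rw [div_mul_eq_mul_div, le_div_iff₀ hR']
  linarith [le_of_mul_le_mul_left hscaled hR']

end Autocorrelation

/-- **Weyl–van der Corput inequality.** -/
theorem weyl_van_der_corput (N R : ℕ) (hR : 0 < R) (z : ℕ → ℂ) :
    ‖∑ n ∈ Finset.range N, z n‖ ^ 2 ≤
      (((N : ℝ) + R - 1) / R) *
        ∑ r ∈ Finset.Icc (-(R : ℤ) + 1) ((R : ℤ) - 1),
          (1 - |(r : ℝ)| / R) *
            ‖∑ n ∈ (Finset.range N).filter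
                (fun n : ℕ => 0 ≤ (n : ℤ) + r ∧ (n : ℤ) + r < (N : ℤ)),
              (starRingEnd ℂ) (z n) * z ((n : ℤ) + r).toNat‖ := by
  set f : ℤ → ℂ := (Set.Ico (0 : ℤ) N).indicator fun n => z n.toNat
  have hf_apply (n : ℤ) : f n = if 0 ≤ n ∧ n < N then z n.toNat else 0 := by
    simp only [f, Set.indicator_apply, Set.mem_Ico]
  have hf_natCast : ∀ k < N, f k = z k := fun k hk => by simp [hf_apply, hk]
  have hsum : ∑ n ∈ Ico (0 : ℤ) N, f n = ∑ n ∈ range N, z n := by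
    rw [sum_Ico_zero_eq_sum_range]
    exact sum_congr rfl fun k hk => hf_natCast k (mem_range.mp hk)
  have hcorr (r : ℤ) : autocorrelation f N r = ∑ n ∈ (range N).filter
      (fun n : ℕ => 0 ≤ (n : ℤ) + r ∧ (n : ℤ) + r < (N : ℤ)),
        starRingEnd ℂ (z n) * z ((n : ℤ) + r).toNat := by
    rw [autocorrelation, sum_Ico_zero_eq_sum_range, sum_filter]
    refine sum_congr rfl fun k hk => ?_
    rw [hf_natCast k (mem_range.mp hk), hf_apply, mul_ite, mul_zero]
  have key := norm_sum_sq_le_autocorrelation (f := f) hR Set.support_indicator_subset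
  simpa only [hsum, hcorr] using key
end

section
/- Let m ≥ 2, d = m² + 4m and φ = (m + 2 + √d)/2. Then for every integer ℓ ≥ 0, q_{2ℓ} = ((m + √d)/(2√d)) φ^ℓ − ((m − √d)/(2√d)) φ^{−ℓ} and q_{2ℓ+1} = (1/√d) φ^{ℓ+1} − (1/√d) φ^{−ℓ−1}. -/
noncomputable section

/-- Denominators of the convergents of `α = [0; 1, m, 1, m, …]`:
`q_0 = q_1 = 1`, `q_n = m·q_{n-1} + q_{n-2}` for even `n ≥ 2`, and
`q_n = q_{n-1} + q_{n-2}` for odd `n ≥ 3`. -/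
def qseq (m : ℕ) : ℕ → ℕ
  | 0 => 1
  | 1 => 1
  | n + 2 => (if n % 2 = 0 then m else 1) * qseq m (n + 1) + qseq m n

/-- Binet-type formulas for `q_{2ℓ}` and `q_{2ℓ+1}`. -/
theorem qseq_binet (m : ℕ) (hm : 2 ≤ m) (ℓ : ℕ) :
    (qseq m (2 * ℓ) : ℝ) =
        (((m : ℝ) + Real.sqrt ((m : ℝ) ^ 2 + 4 * m)) /
            (2 * Real.sqrt ((m : ℝ) ^ 2 + 4 * m))) * phi m ^ (ℓ : ℤ) -
          (((m : ℝ) - Real.sqrt ((m : ℝ) ^ 2 + 4 * m)) /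
            (2 * Real.sqrt ((m : ℝ) ^ 2 + 4 * m))) * phi m ^ (-(ℓ : ℤ)) ∧
      (qseq m (2 * ℓ + 1) : ℝ) =
        (1 / Real.sqrt ((m : ℝ) ^ 2 + 4 * m)) * phi m ^ ((ℓ : ℤ) + 1) -
          (1 / Real.sqrt ((m : ℝ) ^ 2 + 4 * m)) * phi m ^ (-(ℓ : ℤ) - 1) := by
  have hm' : (2:ℝ) ≤ (m:ℝ) := by exact_mod_cast hm
  have hd : (0:ℝ) < (m:ℝ)^2 + 4*m := by nlinarith
  set s := Real.sqrt ((m:ℝ)^2 + 4*m) with hsdef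
  have hs2 : s^2 = (m:ℝ)^2 + 4*m := Real.sq_sqrt hd.le
  have hspos : 0 < s := Real.sqrt_pos.2 hd
  have hphi : phi m = ((m:ℝ) + 2 + s)/2 := rfl
  have hphipos : 0 < phi m := by
    rw [hphi]; positivity
  have hne : phi m ≠ 0 := ne_of_gt hphipos
  have hinv : (phi m)⁻¹ = ((m:ℝ) + 2 - s)/2 := by
    apply inv_eq_of_mul_eq_one_right
    rw [hphi]
    field_simp
    nlinarith [hs2]
  induction ℓ with
  | zero =>
    constructor
    · norm_num [qseq]
      rw [div_sub_div_same, show (m:ℝ) + s - ((m:ℝ) - s) = 2*s by ring]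
      field_simp
    · norm_num [qseq]
      rw [hinv, hphi]
      field_simp
      ring
  | succ ℓ ih =>
    obtain ⟨ih1, ih2⟩ := ih
    set A := phi m ^ (ℓ:ℤ) with hA
    set B := phi m ^ (-(ℓ:ℤ)) with hB
    have e1 : phi m ^ ((ℓ:ℤ)+1) = A * (((m:ℝ)+2+s)/2) := by
      rw [zpow_add₀ hne, zpow_one, ← hA, hphi]
    have e2 : phi m ^ (-(ℓ:ℤ)-1) = B * (((m:ℝ)+2-s)/2) := by
      rw [sub_eq_add_neg, zpow_add₀ hne, zpow_neg_one, ← hB, hinv]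
    have e3 : phi m ^ ((ℓ:ℤ)+1+1) = A * (((m:ℝ)+2+s)/2) * (((m:ℝ)+2+s)/2) := by
      rw [zpow_add₀ hne, zpow_one, e1, hphi]
    have e4 : phi m ^ (-(ℓ:ℤ)-1-1) = B * (((m:ℝ)+2-s)/2) * (((m:ℝ)+2-s)/2) := by
      rw [show (-(ℓ:ℤ)-1-1) = (-(ℓ:ℤ)-1) + (-1) from by ring, zpow_add₀ hne,
        zpow_neg_one, e2, hinv]
    rw [e1, e2] at ih2
    have hq1 : (qseq m (2*(ℓ+1)) : ℝ) = m * qseq m (2*ℓ+1) + qseq m (2*ℓ) := by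
      have : 2*(ℓ+1) = (2*ℓ) + 2 := by ring
      rw [this, qseq]
      simp [Nat.mul_mod_right]
    have hq2 : (qseq m (2*(ℓ+1)+1) : ℝ) = qseq m (2*(ℓ+1)) + qseq m (2*ℓ+1) := by
      have : 2*(ℓ+1)+1 = (2*ℓ+1) + 2 := by ring
      rw [this, qseq]
      have h1 : (2*ℓ+1) % 2 = 1 := by omega
      rw [h1]
      push_cast
      have : (2*ℓ+1) + 1 = 2*(ℓ+1) := by ring
      rw [this]
      ring
    have ee1 : phi m ^ ((↑(ℓ+1):ℤ)) = A * (((m:ℝ)+2+s)/2) := by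
      push_cast; exact e1
    have ee2 : phi m ^ (-(↑(ℓ+1):ℤ)) = B * (((m:ℝ)+2-s)/2) := by
      push_cast
      rw [show (-((ℓ:ℤ)+1)) = -(ℓ:ℤ)-1 from by ring]
      exact e2
    have ee3 : phi m ^ ((↑(ℓ+1):ℤ)+1) = A * (((m:ℝ)+2+s)/2) * (((m:ℝ)+2+s)/2) := by
      push_cast; exact e3
    have ee4 : phi m ^ (-(↑(ℓ+1):ℤ)-1) = B * (((m:ℝ)+2-s)/2) * (((m:ℝ)+2-s)/2) := by
      push_cast
      rw [show (-((ℓ:ℤ)+1)-1) = -(ℓ:ℤ)-1-1 from by ring]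
      exact e4
    have hsne : s ≠ 0 := ne_of_gt hspos
    have geven : (qseq m (2*(ℓ+1)) : ℝ) =
        (((m:ℝ) + s) / (2*s)) * phi m ^ ((↑(ℓ+1):ℤ)) -
          (((m:ℝ) - s) / (2*s)) * phi m ^ (-(↑(ℓ+1):ℤ)) := by
      rw [hq1, ee1, ee2]
      linear_combination (m:ℝ) * ih2 + ih1 + ((B - A)/(4*s)) * hs2
    constructor
    · exact geven
    · rw [hq2, geven, ee1, ee2, ee3, ee4]
      linear_combination ih2

end
end
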